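/- arXiv:1703.05097 — 2 statements merged into one kernel-verified Lean document; each statement's English description precedes it below -/
import Mathlib

section
/- In a level-1 phylogenetic network N on a finite set X, for distinct taxa x, y ∈ X, the equality lca(x,y) = lsa(x,y) holds if and only if x and y have no splitting ancestor in N. -/
open Relation

/-- A rooted phylogenetic network on a finite taxa set `X` with vertex type `V`:
a finite simple acyclic digraph with a unique root (indegree 0, reaching every
vertex), no vertices with indegree 1 and outdegree 1, whose leaves (outdegree-0
vertices) are bijectively labelled by `X`. -/
structure PhyloNetwork (V X : Type) [Fintype V] [Fintype X] where
  /-- arc relation of the digraph -/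
  Adj : V → V → Prop
  /-- acyclicity: no directed cycle -/
  acyclic : ∀ v, ¬ Relation.TransGen Adj v v
  /-- the root -/
  root : V
  /-- the root has indegree 0 -/
  root_no_parent : ∀ u, ¬ Adj u root
  /-- every vertex is reachable from the root by a directed path -/
  root_reaches : ∀ v, Relation.ReflTransGen Adj root v
  /-- no vertex has indegree 1 and outdegree 1 -/
  no_degenerate : ∀ v, ¬ ({u | Adj u v}.ncard = 1 ∧ {u | Adj v u}.ncard = 1)
  /-- the leaves are bijectively labelled by the taxa in `X` -/
  label : X ≃ {v : V // ∀ u, ¬ Adj v u}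

namespace PhyloNetwork

variable {V X : Type} [Fintype V] [Fintype X] (N : PhyloNetwork V X)

/-- a leaf is a vertex of outdegree 0 -/
def IsLeaf (v : V) : Prop := ∀ u, ¬ N.Adj v u

/-- the leaf labelled by taxon `x` -/
def leaf (x : X) : V := (N.label x).val

/-- `u` is below `v` (equivalently, `v` is above `u`): there is a directed
path from `v` to `u` -/
def below (u v : V) : Prop := Relation.ReflTransGen N.Adj v u

/-- `u` is strictly below `v` -/
def strictlyBelow (u v : V) : Prop := N.below u v ∧ u ≠ v

/-- the cluster of a vertex: the set of taxa labelling the leaves below it -/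
def cluster (v : V) : Set X := {x | N.below (N.leaf x) v}

/-- a common ancestor of a set `Y` of taxa -/
def CommonAncestor (Y : Set X) (v : V) : Prop := Y ⊆ N.cluster v

/-- a lowest common ancestor (LCA) of `Y`: a common ancestor of `Y` such that
no other common ancestor of `Y` is strictly below it -/
def IsLCA (Y : Set X) (v : V) : Prop :=
  N.CommonAncestor Y v ∧ ∀ u, N.CommonAncestor Y u → ¬ N.strictlyBelow u v

/-- `p` is a directed path from `u` to `v`, recorded as its list of vertices -/
def IsDipath (p : List V) (u v : V) : Prop :=
  p ≠ [] ∧ p.head? = some u ∧ p.getLast? = some v ∧ p.Chain' N.Adj ∧ p.Nodup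

/-- the arc `(a, b)` is traversed by the path `p` -/
def ArcIn (p : List V) (a b : V) : Prop := (a, b) ∈ p.zip p.tail

/-- a stable ancestor of `Y`: a vertex contained in every directed path from
the root to some taxon in `Y` -/
def StableAncestor (Y : Set X) (v : V) : Prop :=
  ∀ x ∈ Y, ∀ p : List V, N.IsDipath p N.root (N.leaf x) → v ∈ p

/-- the lowest stable ancestor (LSA) of `Y`: the stable ancestor of `Y`
that is below every stable ancestor of `Y` -/
def IsLSA (Y : Set X) (w : V) : Prop :=
  N.StableAncestor Y w ∧ ∀ v, N.StableAncestor Y v → N.below w v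

/-- the underlying undirected graph of the network -/
def underlying : SimpleGraph V := SimpleGraph.fromRel N.Adj

/-- indegree of a vertex -/
noncomputable def inDeg (v : V) : ℕ := {u | N.Adj u v}.ncard

/-- outdegree of a vertex -/
noncomputable def outDeg (v : V) : ℕ := {u | N.Adj v u}.ncard

/-- binary network: every non-leaf vertex has indegree at most 2 and
outdegree at most 2, and every vertex of indegree 2 has outdegree 1 -/
def Binary : Prop :=
  (∀ v, ¬ N.IsLeaf v → N.inDeg v ≤ 2 ∧ N.outDeg v ≤ 2) ∧
  (∀ v, N.inDeg v = 2 → N.outDeg v = 1)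

/-- level-1 network: binary, and any two cycles of the underlying undirected
graph are vertex-disjoint (i.e. any two cycles sharing a vertex have the same
vertex set) -/
def Level1 : Prop :=
  N.Binary ∧ ∀ (u v : V) (c₁ : N.underlying.Walk u u) (c₂ : N.underlying.Walk v v),
    c₁.IsCycle → c₂.IsCycle → ∀ w, w ∈ c₁.support → w ∈ c₂.support →
      ∀ z, (z ∈ c₁.support ↔ z ∈ c₂.support)

/-- a cut arc: an arc whose removal disconnects the underlying undirected graph -/
def CutArc (a b : V) : Prop :=
  N.Adj a b ∧ ¬ (SimpleGraph.fromRel (fun u v => N.Adj u v ∧ ¬ (u = a ∧ v = b))).Connected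

/-- a splitting ancestor of distinct taxa `x` and `y`: a (non-leaf) vertex such
that precisely one taxon from `{x, y}` is below both of its children, while the
other taxon is below exactly one of its two children -/
def SplittingAncestor (x y : X) (v : V) : Prop :=
  ∃ c₁ c₂, c₁ ≠ c₂ ∧ N.Adj v c₁ ∧ N.Adj v c₂ ∧
    ((N.below (N.leaf x) c₁ ∧ N.below (N.leaf x) c₂ ∧
        Xor' (N.below (N.leaf y) c₁) (N.below (N.leaf y) c₂)) ∨
     (N.below (N.leaf y) c₁ ∧ N.below (N.leaf y) c₂ ∧
        Xor' (N.below (N.leaf x) c₁) (N.below (N.leaf x) c₂)))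

/-- saturated level-1 network: each non-leaf vertex is contained in a cycle of
size three of the underlying undirected graph -/
def Saturated : Prop :=
  ∀ v, ¬ N.IsLeaf v → ∃ c : N.underlying.Walk v v, c.IsCycle ∧ c.length = 3

/-- the multiset of clusters induced by the vertices of the network -/
noncomputable def clusterMultiset : Multiset (Set X) :=
  (Finset.univ : Finset V).val.map N.cluster

/-- the Robinson–Foulds distance: the size of the symmetric difference of the
multisets of clusters of the two networks -/
noncomputable def rfDist {V V' X : Type} [Fintype V] [Fintype V'] [Fintype X]
    (N : PhyloNetwork V X) (N' : PhyloNetwork V' X) : ℕ :=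
  letI : DecidableEq (Set X) := Classical.decEq _
  ((N.clusterMultiset - N'.clusterMultiset) +
    (N'.clusterMultiset - N.clusterMultiset)).card

end PhyloNetwork


/-!
If `x` and `y` have no splitting ancestor, every directed path from the root to `x` passes through
`u = lca(x, y)`: an arc of such a path leaving the vertices above `u` would start at a proper
ancestor `a` of `u` and end at a vertex above `x` but not above `u`, hence not above `y`, because in
a level-1 network the LCA lies below every common ancestor; then `a` splits `x` and `y`. So `u` is a
stable ancestor, and a stable ancestor that is an LCA is the LSA. Conversely, a splitting ancestor
yields a path from the root to one of the taxa that avoids `u`.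

Level-1 enters only through "the LCA lies below every common ancestor `b`". Otherwise a lowest
common ancestor `z` of `u` and `b`, and highest common descendants `s` of `u`, `b` above `x` and
`t` above `y`, span two cycles `z → u → s ← b ← z` and `z → u → t ← b ← z`. They share `z`, so
they have the same vertices; this forces `s` above `t`, and `s` is a common ancestor of `{x, y}`
strictly below `u`.
-/

namespace SimpleGraph.Walk

variable {V : Type} {G : SimpleGraph V}

theorem isPath_append {a b c : V} {p : G.Walk a b} {q : G.Walk b c} (hp : p.IsPath)
    (hq : q.IsPath) (h : ∀ v ∈ p.support, v ∈ q.support → v = b) : (p.append q).IsPath := by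
  rw [isPath_def, support_append]
  refine hp.support_nodup.append hq.support_nodup.tail fun v hvp hvq => ?_
  obtain rfl := h v hvp (List.mem_of_mem_tail hvq)
  have hnd := hq.support_nodup
  rw [← cons_tail_support] at hnd
  exact (List.nodup_cons.1 hnd).1 hvq

theorem IsPath.isCycle_append_reverse {a c : V} {p q : G.Walk a c} (hp : p.IsPath)
    (hq : q.IsPath) (h : ∀ v ∈ p.support, v ∈ q.support → v = a ∨ v = c) (hlen : 1 < p.length) :
    (p.append q.reverse).IsCycle := by
  have hqr : q.reverse.IsPath := (isPath_reverse_iff q).2 hq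
  refine hp.isCycle_append hqr (fun v hvp hvq => ?_) (Or.inl hlen)
  have hnd₁ := hp.support_nodup
  have hnd₂ := hqr.support_nodup
  rw [← cons_tail_support] at hnd₁ hnd₂
  have hvq' : v ∈ q.support := by
    simpa only [support_reverse, List.mem_reverse] using List.mem_of_mem_tail hvq
  rcases h v (List.mem_of_mem_tail hvp) hvq' with rfl | rfl
  · exact (List.nodup_cons.1 hnd₁).1 hvp
  · exact (List.nodup_cons.1 hnd₂).1 hvq

end SimpleGraph.Walk

namespace PhyloNetwork

open Relation SimpleGraph

variable {V X : Type} [Fintype V] [Fintype X]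

section Basic

variable (N : PhyloNetwork V X)

theorem below_refl (a : V) : N.below a a := ReflTransGen.refl

theorem below_trans {a b c : V} (hab : N.below a b) (hbc : N.below b c) : N.below a c :=
  ReflTransGen.trans hbc hab

theorem below_of_adj {a b : V} (h : N.Adj a b) : N.below b a := ReflTransGen.single h

theorem below_root (a : V) : N.below a N.root := N.root_reaches a

theorem below_antisymm {a b : V} (hab : N.below a b) (hba : N.below b a) : a = b := by
  rcases reflTransGen_iff_eq_or_transGen.1 hab with h | h
  · exact h
  rcases reflTransGen_iff_eq_or_transGen.1 hba with h' | h'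
  · exact h'.symm
  · exact absurd (h.trans h') (N.acyclic b)

theorem eq_leaf_of_below_leaf {x : X} {v : V} (h : N.below v (N.leaf x)) : v = N.leaf x := by
  rcases h.cases_head with h | ⟨c, hc, -⟩
  · exact h.symm
  · exact absurd hc ((N.label x).2 c)

theorem exists_adj_of_below {a b : V} (h : N.below b a) (hne : a ≠ b) :
    ∃ c, N.Adj a c ∧ N.below b c :=
  (ReflTransGen.cases_head h).resolve_left hne

theorem exists_maximal (S : Set V) (hS : S.Nonempty) : ∃ s ∈ S, ∀ v ∈ S, N.below s v → v = s := by
  have : IsTrans V (TransGen N.Adj) := ⟨fun _ _ _ => TransGen.trans⟩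
  have : Std.Irrefl (TransGen N.Adj) := ⟨N.acyclic⟩
  obtain ⟨s, hs, hmax⟩ := (Finite.wellFounded_of_trans_of_irrefl (TransGen N.Adj)).has_min S hS
  refine ⟨s, hs, fun v hv hsv => ?_⟩
  rcases reflTransGen_iff_eq_or_transGen.1 hsv with h | h
  · exact h.symm
  · exact absurd h (hmax v hv)

theorem exists_minimal (S : Set V) (hS : S.Nonempty) : ∃ z ∈ S, ∀ v ∈ S, N.below v z → v = z := by
  have : IsTrans V (flip (TransGen N.Adj)) := ⟨fun _ _ _ h₁ h₂ => TransGen.trans h₂ h₁⟩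
  have : Std.Irrefl (flip (TransGen N.Adj)) := ⟨N.acyclic⟩
  obtain ⟨z, hz, hmin⟩ :=
    (Finite.wellFounded_of_trans_of_irrefl (flip (TransGen N.Adj))).has_min S hS
  refine ⟨z, hz, fun v hv hvz => ?_⟩
  rcases reflTransGen_iff_eq_or_transGen.1 hvz with h | h
  · exact h
  · exact absurd h (hmin v hv)

theorem commonAncestor_pair_iff {x y : X} {v : V} :
    N.CommonAncestor {x, y} v ↔ N.below (N.leaf x) v ∧ N.below (N.leaf y) v :=
  Set.pair_subset_iff

theorem splittingAncestor_comm {x y : X} {v : V} :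
    N.SplittingAncestor x y v ↔ N.SplittingAncestor y x v :=
  ⟨fun ⟨c₁, c₂, hne, h₁, h₂, h⟩ => ⟨c₁, c₂, hne, h₁, h₂, h.symm⟩,
    fun ⟨c₁, c₂, hne, h₁, h₂, h⟩ => ⟨c₁, c₂, hne, h₁, h₂, h.symm⟩⟩

end Basic

section Dipath

variable (N : PhyloNetwork V X)

theorem nodup_of_isChain {p : List V} (hp : p.IsChain N.Adj) : p.Nodup := by
  refine (List.isChain_iff_pairwise.1 (hp.imp fun _ _ => TransGen.single)).imp ?_
  rintro a _ h rfl
  exact N.acyclic a h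

theorem exists_isDipath {a b : V} (h : N.below b a) : ∃ p, N.IsDipath p a b := by
  obtain ⟨l, hl, hlast⟩ := List.exists_isChain_cons_of_relationReflTransGen h
  refine ⟨a :: l, List.cons_ne_nil _ _, rfl, ?_, hl, N.nodup_of_isChain hl⟩
  rw [List.getLast?_eq_some_getLast (List.cons_ne_nil _ _), hlast]

variable {N}

theorem IsDipath.head_eq {p : List V} {a b : V} (hp : N.IsDipath p a b) : p.head hp.1 = a :=
  Option.some_injective _ ((List.head?_eq_some_head hp.1).symm.trans hp.2.1)

theorem IsDipath.getLast_eq {p : List V} {a b : V} (hp : N.IsDipath p a b) :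
    p.getLast hp.1 = b :=
  Option.some_injective _ ((List.getLast?_eq_some_getLast hp.1).symm.trans hp.2.2.1)

theorem IsDipath.below_of_mem {p : List V} {a b v : V} (hp : N.IsDipath p a b) (hv : v ∈ p) :
    N.below v a ∧ N.below b v :=
  ⟨List.IsChain.induction (fun v => N.below v a) p hp.2.2.2.1
      (fun _ _ hab hx => N.below_trans (N.below_of_adj hab) hx)
      (fun _ => hp.head_eq ▸ N.below_refl _) v hv,
    List.IsChain.backwards_induction (fun v => N.below b v) p hp.2.2.2.1
      (fun _ _ hab hy => N.below_trans hy (N.below_of_adj hab))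
      (fun _ => hp.getLast_eq ▸ N.below_refl _) v hv⟩

theorem exists_isDipath_through_adj {a v c b : V} (hva : N.below v a) (hvc : N.Adj v c)
    (hbc : N.below b c) :
    ∃ p, N.IsDipath p a b ∧ ∀ m ∈ p, N.below v m ∨ N.below m c := by
  obtain ⟨p, hp⟩ := N.exists_isDipath hva
  obtain ⟨q, hq⟩ := N.exists_isDipath hbc
  have hch : (p ++ q).IsChain N.Adj := by
    refine List.isChain_append.2 ⟨hp.2.2.2.1, hq.2.2.2.1, fun v' hv' c' hc' => ?_⟩
    rw [hp.2.2.1, Option.mem_some_iff] at hv'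
    rw [hq.2.1, Option.mem_some_iff] at hc'
    exact hv' ▸ hc' ▸ hvc
  refine ⟨p ++ q, ⟨by simp [hp.1], ?_, ?_, hch, N.nodup_of_isChain hch⟩, fun m hm => ?_⟩
  · rw [List.head?_append, hp.2.1]; rfl
  · rw [List.getLast?_append, hq.2.2.1]; rfl
  · rcases List.mem_append.1 hm with hm | hm
    · exact Or.inl (hp.below_of_mem hm).2
    · exact Or.inr (hq.below_of_mem hm).1

theorem StableAncestor.commonAncestor {Y : Set X} {v : V} (h : N.StableAncestor Y v) :
    N.CommonAncestor Y v := fun x hx => by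
  obtain ⟨p, hp⟩ := N.exists_isDipath (N.below_root (N.leaf x))
  exact (hp.below_of_mem (h x hx p hp)).2

theorem IsLCA.eq_of_isLSA {Y : Set X} {u w : V} (hu : N.IsLCA Y u) (hs : N.StableAncestor Y u)
    (hw : N.IsLSA Y w) : u = w := by
  by_contra hne
  exact hu.2 w hw.1.commonAncestor ⟨hw.2 u hs, fun h => hne h.symm⟩

end Dipath

section LevelOne

variable (N : PhyloNetwork V X)

theorem exists_isPath_underlying {a b : V} (h : N.below b a) :
    ∃ p : N.underlying.Walk a b, p.IsPath ∧ ∀ v ∈ p.support, N.below v a ∧ N.below b v := by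
  induction h using ReflTransGen.head_induction_on with
  | refl => exact ⟨Walk.nil, Walk.IsPath.nil, fun v hv => by
      obtain rfl := List.mem_singleton.1 hv; exact ⟨N.below_refl _, N.below_refl _⟩⟩
  | @head a c hac hcb ih =>
    obtain ⟨p, hp, hbetween⟩ := ih
    have hadj : N.underlying.Adj a c :=
      (fromRel_adj _ _ _).2 ⟨by rintro rfl; exact N.acyclic a (TransGen.single hac), Or.inl hac⟩
    have ha : a ∉ p.support := fun hmem =>
      N.acyclic a (TransGen.head' hac (hbetween a hmem).1)
    refine ⟨Walk.cons hadj p, hp.cons ha, fun v hv => ?_⟩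
    rcases List.mem_cons.1 (Walk.support_cons hadj p ▸ hv) with rfl | hv
    · exact ⟨N.below_refl _, ReflTransGen.head hac hcb⟩
    · exact ⟨N.below_trans (hbetween v hv).1 (N.below_of_adj hac), (hbetween v hv).2⟩

theorem exists_isCycle_of_incomparable {u b z s : V} (hub : ¬ N.below u b) (hbu : ¬ N.below b u)
    (huz : N.below u z) (hbz : N.below b z)
    (hz : ∀ v, N.below u v → N.below b v → N.below v z → v = z)
    (hsu : N.below s u) (hsb : N.below s b)
    (hs : ∀ v, N.below v u → N.below v b → N.below s v → v = s) :
    ∃ c : N.underlying.Walk z z, c.IsCycle ∧ s ∈ c.support ∧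
      ∀ v ∈ c.support, N.below u v ∨ N.below b v ∨ N.below s v := by
  obtain ⟨P₁, hP₁, hB₁⟩ := N.exists_isPath_underlying huz
  obtain ⟨P₂, hP₂, hB₂⟩ := N.exists_isPath_underlying hsu
  obtain ⟨P₃, hP₃, hB₃⟩ := N.exists_isPath_underlying hbz
  obtain ⟨P₄, hP₄, hB₄⟩ := N.exists_isPath_underlying hsb
  have hQ₁ : (P₁.append P₂).IsPath := Walk.isPath_append hP₁ hP₂ fun v h₁ h₂ =>
    N.below_antisymm (hB₂ v h₂).1 (hB₁ v h₁).2
  have hQ₂ : (P₃.append P₄).IsPath := Walk.isPath_append hP₃ hP₄ fun v h₁ h₂ =>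
    N.below_antisymm (hB₄ v h₂).1 (hB₃ v h₁).2
  have hmeet : ∀ v ∈ (P₁.append P₂).support, v ∈ (P₃.append P₄).support → v = z ∨ v = s := by
    intro v h₁ h₂
    rw [Walk.mem_support_append_iff] at h₁ h₂
    rcases h₁ with h₁ | h₁ <;> rcases h₂ with h₂ | h₂
    · exact Or.inl (hz v (hB₁ v h₁).2 (hB₃ v h₂).2 (hB₁ v h₁).1)
    · exact absurd (N.below_trans (hB₁ v h₁).2 (hB₄ v h₂).1) hub
    · exact absurd (N.below_trans (hB₃ v h₂).2 (hB₂ v h₁).1) hbu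
    · exact Or.inr (hs v (hB₂ v h₁).1 (hB₄ v h₂).1 (hB₂ v h₁).2)
  have hlen : 1 < (P₁.append P₂).length := by
    have h₁ : P₁.length ≠ 0 := fun h => hbu (Walk.eq_of_length_eq_zero h ▸ hbz)
    have h₂ : P₂.length ≠ 0 := fun h => hub (Walk.eq_of_length_eq_zero h ▸ hsb)
    rw [Walk.length_append]
    omega
  refine ⟨_, hQ₁.isCycle_append_reverse hQ₂ hmeet hlen, ?_, fun v hv => ?_⟩
  · exact (Walk.mem_support_append_iff _ _).2 (Or.inl (P₁.append P₂).end_mem_support)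
  rw [Walk.mem_support_append_iff, Walk.support_reverse, List.mem_reverse,
    Walk.mem_support_append_iff, Walk.mem_support_append_iff] at hv
  rcases hv with (hv | hv) | (hv | hv)
  · exact Or.inl (hB₁ v hv).2
  · exact Or.inr (Or.inr (hB₂ v hv).2)
  · exact Or.inr (Or.inl (hB₃ v hv).2)
  · exact Or.inr (Or.inr (hB₄ v hv).2)

variable {N}

theorem IsLCA.below_of_commonAncestor (hN : N.Level1) {x y : X} {u b : V}
    (hu : N.IsLCA {x, y} u) (hb : N.CommonAncestor {x, y} b) : N.below u b := by
  by_contra hub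
  have hbu : ¬ N.below b u := fun h => hu.2 b hb ⟨h, fun e => hub (e ▸ N.below_refl b)⟩
  obtain ⟨hux, huy⟩ := N.commonAncestor_pair_iff.1 hu.1
  obtain ⟨hbx, hby⟩ := N.commonAncestor_pair_iff.1 hb
  obtain ⟨z, ⟨huz, hbz⟩, hz⟩ := N.exists_minimal {v | N.below u v ∧ N.below b v}
    ⟨N.root, N.below_root u, N.below_root b⟩
  have hcycle : ∀ l, N.below l u → N.below l b → ∃ s, N.below s u ∧ N.below s b ∧
      N.below l s ∧ ∃ c : N.underlying.Walk z z, c.IsCycle ∧ s ∈ c.support ∧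
        ∀ v ∈ c.support, N.below u v ∨ N.below b v ∨ N.below s v := by
    intro l hlu hlb
    obtain ⟨s, ⟨hsu, hsb, hls⟩, hs⟩ := N.exists_maximal
      {v | N.below v u ∧ N.below v b ∧ N.below l v} ⟨l, hlu, hlb, N.below_refl l⟩
    exact ⟨s, hsu, hsb, hls, N.exists_isCycle_of_incomparable hub hbu huz hbz
      (fun v h₁ h₂ h₃ => hz v ⟨h₁, h₂⟩ h₃) hsu hsb
      (fun v h₁ h₂ h₃ => hs v ⟨h₁, h₂, N.below_trans hls h₃⟩ h₃)⟩
  obtain ⟨s, hsu, hsb, hxs, Cs, hCs, hsCs, -⟩ := hcycle _ hux hbx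
  obtain ⟨t, -, -, hyt, Ct, hCt, -, hCt_supp⟩ := hcycle _ huy hby
  have hsCt : s ∈ Ct.support :=
    (hN.2 z z Cs Ct hCs hCt z Cs.start_mem_support Ct.start_mem_support s).1 hsCs
  have hsu_ne : s ≠ u := fun e => hub (e ▸ hsb)
  rcases hCt_supp s hsCt with h | h | h
  · exact hsu_ne (N.below_antisymm hsu h)
  · exact hbu (N.below_antisymm hsb h ▸ hsu)
  · exact hu.2 s (N.commonAncestor_pair_iff.2 ⟨hxs, N.below_trans hyt h⟩) ⟨hsu, hsu_ne⟩

end LevelOne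

section Splitting

variable {N : PhyloNetwork V X} {x y : X} {u : V}

theorem IsLCA.not_stableAncestor_of_adj {v c₁ c₂ : V} (hu : N.IsLCA {x, y} u)
    (h₁ : N.Adj v c₁) (h₂ : N.Adj v c₂) (hx₁ : N.below (N.leaf x) c₁)
    (hy₁ : N.below (N.leaf y) c₁) (hx₂ : N.below (N.leaf x) c₂)
    (hy₂ : ¬ N.below (N.leaf y) c₂) : ¬ N.StableAncestor {x, y} u := fun hs => by
  obtain ⟨p, hp, hpm⟩ := N.exists_isDipath_through_adj (N.below_root v) h₂ hx₂
  rcases hpm u (hs x (Set.mem_insert x {y}) p hp) with hvu | huc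
  · have hc₁u : N.below c₁ u := N.below_trans (N.below_of_adj h₁) hvu
    refine hu.2 c₁ (N.commonAncestor_pair_iff.2 ⟨hx₁, hy₁⟩) ⟨hc₁u, fun e => ?_⟩
    exact N.acyclic v (TransGen.head' h₁ (e ▸ hvu))
  · exact hy₂ (N.below_trans ((N.commonAncestor_pair_iff.1 hu.1).2) huc)

theorem IsLCA.not_splittingAncestor (hu : N.IsLCA {x, y} u) (hs : N.StableAncestor {x, y} u)
    (v : V) : ¬ N.SplittingAncestor x y v := by
  rintro ⟨c₁, c₂, -, h₁, h₂, ⟨hx₁, hx₂, hy⟩ | ⟨hy₁, hy₂, hx⟩⟩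
  · rcases hy with ⟨hy₁, hy₂⟩ | ⟨hy₂, hy₁⟩
    · exact hu.not_stableAncestor_of_adj h₁ h₂ hx₁ hy₁ hx₂ hy₂ hs
    · exact hu.not_stableAncestor_of_adj h₂ h₁ hx₂ hy₂ hx₁ hy₁ hs
  · rw [Set.pair_comm] at hu hs
    rcases hx with ⟨hx₁, hx₂⟩ | ⟨hx₂, hx₁⟩
    · exact hu.not_stableAncestor_of_adj h₁ h₂ hy₁ hx₁ hy₂ hx₂ hs
    · exact hu.not_stableAncestor_of_adj h₂ h₁ hy₂ hx₂ hy₁ hx₁ hs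

theorem IsLCA.below_of_adj_of_forall_not_splittingAncestor (hN : N.Level1)
    (hu : N.IsLCA {x, y} u) (hns : ∀ v, ¬ N.SplittingAncestor x y v) {a b : V}
    (hab : N.Adj a b) (hua : N.below u a) (hau : a ≠ u) (hxb : N.below (N.leaf x) b) :
    N.below u b := by
  by_contra hub
  obtain ⟨c, hac, huc⟩ := N.exists_adj_of_below hua hau
  obtain ⟨hux, huy⟩ := N.commonAncestor_pair_iff.1 hu.1
  by_cases hyb : N.below (N.leaf y) b
  · exact hub (hu.below_of_commonAncestor hN (N.commonAncestor_pair_iff.2 ⟨hxb, hyb⟩))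
  · refine hns a ⟨c, b, fun e => hub (e ▸ huc), hac, hab, Or.inl ⟨?_, hxb, Or.inl ⟨?_, hyb⟩⟩⟩
    · exact N.below_trans hux huc
    · exact N.below_trans huy huc

theorem IsLCA.mem_of_isDipath (hN : N.Level1) (hu : N.IsLCA {x, y} u)
    (hns : ∀ v, ¬ N.SplittingAncestor x y v) {p : List V}
    (hp : N.IsDipath p N.root (N.leaf x)) : u ∈ p := by
  by_contra hup
  have hch : p.IsChain fun a b => N.below u a → N.below u b :=
    List.IsChain.imp_of_mem_imp (fun a b ha hb hab hua =>
      hu.below_of_adj_of_forall_not_splittingAncestor hN hns hab hua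
        (fun e => hup (e ▸ ha)) (hp.below_of_mem hb).2) hp.2.2.2.1
  have hx : N.leaf x ∈ p := List.mem_of_getLast? hp.2.2.1
  have hux : N.below u (N.leaf x) := hch.induction (fun v => N.below u v) p
    (fun _ _ h => h) (fun _ => hp.head_eq ▸ N.below_root u) _ hx
  exact hup (N.eq_leaf_of_below_leaf hux ▸ hx)

theorem IsLCA.stableAncestor (hN : N.Level1) (hu : N.IsLCA {x, y} u)
    (hns : ∀ v, ¬ N.SplittingAncestor x y v) : N.StableAncestor {x, y} u := by
  rintro z (rfl | rfl) p hp
  · exact hu.mem_of_isDipath hN hns hp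
  · rw [Set.pair_comm] at hu
    exact hu.mem_of_isDipath hN (fun v h => hns v (N.splittingAncestor_comm.2 h)) hp

end Splitting

end PhyloNetwork

theorem lca_eq_lsa_iff_no_splitting_ancestor_general {V X : Type} [Fintype V] [Fintype X]
    (N : PhyloNetwork V X) (hN : N.Level1) (x y : X)
    (u w : V) (hu : N.IsLCA {x, y} u) (hw : N.IsLSA {x, y} w) :
    u = w ↔ ∀ v, ¬ N.SplittingAncestor x y v := by
  constructor
  · rintro rfl
    exact hu.not_splittingAncestor hw.1
  · exact fun hns => hu.eq_of_isLSA (hu.stableAncestor hN hns) hw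

/-- In a level-1 phylogenetic network `N` on a finite set `X`, for
distinct taxa `x, y ∈ X`, the equality `lca(x,y) = lsa(x,y)` holds if and only
if `x` and `y` have no splitting ancestor in `N`. -/
theorem lca_eq_lsa_iff_no_splitting_ancestor {V X : Type} [Fintype V] [Fintype X]
    (N : PhyloNetwork V X) (hN : N.Level1) (x y : X) (hxy : x ≠ y)
    (u w : V) (hu : N.IsLCA {x, y} u) (hw : N.IsLSA {x, y} w) :
    u = w ↔ ∀ v, ¬ N.SplittingAncestor x y v :=
  lca_eq_lsa_iff_no_splitting_ancestor_general N hN x y u w hu hw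
end

section
/- In a level-1 phylogenetic network N on a finite set X, for distinct taxa x, y ∈ X, every splitting ancestor v of x and y satisfies lca(x,y) ≺ v ⪯ lsa(x,y); in particular, v lies on the unique directed path from lsa(x,y) to lca(x,y). -/
open Relation

/-!
If `v` has children `c` and `c'` that both lie above the leaf `a`, the two directed paths from `v`
to `a` through them close an undirected cycle through `v` and `c'`. In a level-1 network every
cycle through `v` has the same vertices, so every cycle through `v` contains `c'`, which is not
above the leaf `b`. Each failure of `lca ≺ v` or of `v ∈ p` would produce two directed paths to
a vertex above `b`, one starting with an arc `v → z` and one avoiding that arc: then `vz` is not a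
bridge of the graph on the vertices above that target, and a cycle through `vz` in it contradicts
the above. Finally `v ⪯ lsa` because the lsa lies on the paths root → `v` → `c'` → `a` and
root → `v` → `c` → `b`, and it cannot lie below both `c'` and above `b`.
-/

namespace PhyloNetwork

variable {V X : Type} [Fintype V] [Fintype X] {N : PhyloNetwork V X}

section Dipaths

variable {a b s t : V} {l l₁ l₂ : List V}

lemma not_below_of_adj (h : N.Adj a b) : ¬ N.below a b :=
  fun hba => N.acyclic a (TransGen.head' h hba)

lemma ne_of_adj (h : N.Adj a b) : a ≠ b := by
  rintro rfl
  exact N.acyclic a (TransGen.single h)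

lemma nodup_of_isChain_s7 (h : l.IsChain N.Adj) : l.Nodup := by
  have : l.Pairwise (TransGen N.Adj) :=
    List.isChain_iff_pairwise.mp (h.imp fun _ _ => TransGen.single)
  refine this.imp fun {a b} hab heq => ?_
  subst heq
  exact N.acyclic a hab

lemma isDipath_of_isChain (h : l.IsChain N.Adj) (hs : l.head? = some s)
    (ht : l.getLast? = some t) : N.IsDipath l s t :=
  ⟨by rintro rfl; simp at hs, hs, ht, h, nodup_of_isChain_s7 h⟩

lemma exists_isDipath_s7 (h : N.below t s) : ∃ l, N.IsDipath l s t := by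
  obtain ⟨l, hne, hc, hs, ht⟩ := List.exists_isChain_ne_nil_of_relationReflTransGen h
  exact ⟨l, isDipath_of_isChain hc (by rw [List.head?_eq_some_head hne, hs])
    (by rw [List.getLast?_eq_some_getLast hne, ht])⟩

lemma IsDipath.isChain (h : N.IsDipath l s t) : l.IsChain N.Adj := h.2.2.2.1

lemma IsDipath.below_source (h : N.IsDipath l s t) (ha : a ∈ l) : N.below a s := by
  obtain ⟨b, l', rfl⟩ := List.exists_cons_of_ne_nil h.1
  obtain rfl : b = s := by simpa using h.2.1
  have := List.isChain_iff_pairwise.mp (h.isChain.imp fun _ _ => ReflTransGen.single)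
  rcases List.mem_cons.mp ha with rfl | ha
  · exact ReflTransGen.refl
  · exact List.rel_of_pairwise_cons this ha

lemma IsDipath.target_below (h : N.IsDipath l s t) (ha : a ∈ l) : N.below t a := by
  obtain ⟨l', b, rfl⟩ := (List.eq_nil_or_concat l).resolve_left h.1
  rw [List.concat_eq_append] at h ha
  obtain rfl : b = t := by simpa using h.2.2.1
  have := List.isChain_iff_pairwise.mp (h.isChain.imp fun _ _ => ReflTransGen.single)
  rcases List.mem_append.mp ha with ha | ha
  · exact (List.pairwise_append.mp this).2.2 a ha b (List.mem_singleton_self b)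
  · rw [List.mem_singleton.mp ha]; exact ReflTransGen.refl

lemma IsDipath.append (h₁ : N.IsDipath l₁ s a) (hab : N.Adj a b) (h₂ : N.IsDipath l₂ b t) :
    N.IsDipath (l₁ ++ l₂) s t := by
  refine isDipath_of_isChain (List.isChain_append.mpr ⟨h₁.isChain, h₂.isChain, ?_⟩) ?_ ?_
  · simpa [h₁.2.2.1, h₂.2.1] using hab
  · simp [List.head?_append, h₁.2.1]
  · simp [List.getLast?_append_of_ne_nil _ h₂.1, h₂.2.2.1]

end Dipaths

lemma StableAncestor.below_or_below_of_adj {Y : Set X} {w v c : V} {x : X}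
    (hw : N.StableAncestor Y w) (hx : x ∈ Y) (hvc : N.Adj v c) (hcx : N.below (N.leaf x) c) :
    N.below v w ∨ (N.below w c ∧ N.below (N.leaf x) w) := by
  obtain ⟨l₁, h₁⟩ := exists_isDipath_s7 (N.root_reaches v)
  obtain ⟨l₂, h₂⟩ := exists_isDipath_s7 hcx
  rcases List.mem_append.mp (hw x hx _ (h₁.append hvc h₂)) with hw₁ | hw₂
  · exact Or.inl (h₁.target_below hw₁)
  · exact Or.inr ⟨h₂.below_source hw₂, h₂.target_below hw₂⟩

lemma StableAncestor.above_of_adj_of_adj {Y : Set X} {w v c c' : V} {a b : X}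
    (hw : N.StableAncestor Y w) (ha : a ∈ Y) (hb : b ∈ Y) (hvc : N.Adj v c) (hvc' : N.Adj v c')
    (hbc : N.below (N.leaf b) c) (hac' : N.below (N.leaf a) c') (hbc' : ¬ N.below (N.leaf b) c') :
    N.below v w := by
  rcases hw.below_or_below_of_adj ha hvc' hac' with h | ⟨hwc', -⟩
  · exact h
  rcases hw.below_or_below_of_adj hb hvc hbc with h | ⟨-, hbw⟩
  · exact h
  exact absurd (ReflTransGen.trans hwc' hbw) hbc'

section Cycles

variable (N) in
def AdjExcept (e : Sym2 V) (a b : V) : Prop := N.Adj a b ∧ s(a, b) ≠ e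

variable (N) in
def aboveGraph (t : V) : SimpleGraph V := SimpleGraph.fromRel fun a b => N.Adj a b ∧ N.below t b

variable {a b c m s t z z' : V} {e : Sym2 V}

lemma aboveGraph_le : N.aboveGraph t ≤ N.underlying := by
  intro a b
  simp only [aboveGraph, underlying, SimpleGraph.fromRel_adj]
  tauto

lemma aboveGraph_adj (hab : N.Adj a b) (htb : N.below t b) : (N.aboveGraph t).Adj a b :=
  (SimpleGraph.fromRel_adj _ _ _).mpr ⟨ne_of_adj hab, Or.inl ⟨hab, htb⟩⟩

lemma below_of_aboveGraph_adj (h : (N.aboveGraph t).Adj a b) : N.below t a ∧ N.below t b := by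
  rcases ((SimpleGraph.fromRel_adj _ _ _).mp h).2 with ⟨hab, htb⟩ | ⟨hba, hta⟩
  · exact ⟨ReflTransGen.head hab htb, htb⟩
  · exact ⟨hta, ReflTransGen.head hba hta⟩

lemma below_of_mem_support {p : (N.aboveGraph t).Walk a b} (hp : ¬ p.Nil) {x : V}
    (hx : x ∈ p.support) : N.below t x := by
  obtain ⟨e, he, hxe⟩ := (SimpleGraph.Walk.mem_support_iff_exists_mem_edges_of_not_nil hp).mp hx
  induction e using Sym2.ind with
  | h a b =>
    have := below_of_aboveGraph_adj (p.adj_of_mem_edges he)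
    rcases Sym2.mem_iff.mp hxe with rfl | rfl
    exacts [this.1, this.2]

lemma reachable_of_reflTransGen_adjExcept (h : ReflTransGen (N.AdjExcept e) a m)
    (hm : N.below t m) : ((N.aboveGraph t).deleteEdges {e}).Reachable a m := by
  induction h using ReflTransGen.head_induction_on with
  | refl => rfl
  | head hab hbm ih =>
    have htb : N.below t _ :=
      ReflTransGen.trans (ReflTransGen.mono (fun _ _ => And.left) _ _ hbm) hm
    refine SimpleGraph.Reachable.trans (SimpleGraph.Adj.reachable ?_) ih
    rw [SimpleGraph.deleteEdges_adj]
    exact ⟨aboveGraph_adj hab.1 htb, hab.2⟩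

lemma reflTransGen_adjExcept_of_not_between (hc : c ∈ e) (h : N.below m a)
    (hca : ¬ (N.below c a ∧ N.below m c)) : ReflTransGen (N.AdjExcept e) a m := by
  revert hca
  induction h using ReflTransGen.head_induction_on with
  | refl => exact fun _ => ReflTransGen.refl
  | head hab hbm ih =>
    intro hca
    refine .head ⟨hab, fun he => hca ?_⟩ (ih fun ⟨hcb, hmc⟩ => hca ⟨.head hab hcb, hmc⟩)
    rcases Sym2.mem_iff.mp (he ▸ hc) with rfl | rfl
    exacts [⟨.refl, .head hab hbm⟩, ⟨.single hab, hbm⟩]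

lemma IsDipath.reflTransGen_adjExcept (hp : N.IsDipath l s t) (hc : c ∈ e) (hcl : c ∉ l) :
    ReflTransGen (N.AdjExcept e) s t := by
  obtain ⟨hne, hs, ht, hchain, -⟩ := hp
  have : l.IsChain (N.AdjExcept e) := hchain.imp_of_mem_imp fun a b ha hb hab =>
    ⟨hab, fun he => by rcases Sym2.mem_iff.mp (he ▸ hc) with rfl | rfl <;> contradiction⟩
  rw [List.head?_eq_some_head hne, Option.some_inj] at hs
  rw [List.getLast?_eq_some_getLast hne, Option.some_inj] at ht
  exact hs ▸ ht ▸ List.relationReflTransGen_of_exists_isChain l this hne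

lemma exists_isCycle_of_bypass (hzz' : N.Adj z z') (hsz : N.below z s) (hz't : N.below t z')
    (hst : ReflTransGen (N.AdjExcept s(z, z')) s t) :
    ∃ (c : V) (C : N.underlying.Walk c c), C.IsCycle ∧ z ∈ C.support ∧ z' ∈ C.support ∧
      ∀ x ∈ C.support, N.below t x := by
  have hzt : N.below t z := ReflTransGen.head hzz' hz't
  have hsz' : ReflTransGen (N.AdjExcept s(z, z')) s z :=
    reflTransGen_adjExcept_of_not_between (Sym2.mem_mk_right z z') hsz
      fun h => not_below_of_adj hzz' h.2
  have hz't' : ReflTransGen (N.AdjExcept s(z, z')) z' t :=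
    reflTransGen_adjExcept_of_not_between (Sym2.mem_mk_left z z') hz't
      fun h => not_below_of_adj hzz' h.1
  have hreach : ((N.aboveGraph t).deleteEdges {s(z, z')}).Reachable z z' :=
    (reachable_of_reflTransGen_adjExcept hsz' hzt).symm.trans
      ((reachable_of_reflTransGen_adjExcept hst .refl).trans
        (reachable_of_reflTransGen_adjExcept hz't' .refl).symm)
  obtain ⟨c, C, hC, he⟩ := SimpleGraph.adj_and_reachable_delete_edges_iff_exists_cycle.mp
    ⟨aboveGraph_adj hzz' hz't, hreach⟩
  refine ⟨c, C.mapLe aboveGraph_le, hC.mapLe aboveGraph_le, ?_⟩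
  simp only [SimpleGraph.Walk.support_mapLe_eq_support]
  exact ⟨C.fst_mem_support_of_mem_edges he, C.snd_mem_support_of_mem_edges he,
    fun x hx => below_of_mem_support hC.not_nil hx⟩

end Cycles

lemma Level1.mem_support_of_adj_of_adj (hN : N.Level1) {v c c' ℓ : V} (hvc : N.Adj v c)
    (hvc' : N.Adj v c') (hne : c ≠ c') (hc : N.below ℓ c) (hc' : N.below ℓ c') {x : V}
    {C : N.underlying.Walk x x} (hC : C.IsCycle) (hv : v ∈ C.support) : c' ∈ C.support := by
  have hbypass : ReflTransGen (N.AdjExcept s(v, c')) v ℓ :=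
    .head ⟨hvc, fun h => hne (Sym2.congr_right.mp h)⟩ <|
      reflTransGen_adjExcept_of_not_between (Sym2.mem_mk_left v c') hc
        fun h => not_below_of_adj hvc h.1
  obtain ⟨x₁, C₁, hC₁, hv₁, hc'₁, -⟩ :=
    exists_isCycle_of_bypass hvc' .refl hc' hbypass
  exact (hN.2 x₁ x C₁ C hC₁ hC v hv₁ hv c').mp hc'₁

variable (N) in
structure Splits (a b : X) (v c c' : V) : Prop where
  ne : c ≠ c'
  adj : N.Adj v c
  adj' : N.Adj v c'
  a_below : N.below (N.leaf a) c
  a_below' : N.below (N.leaf a) c'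
  b_below : N.below (N.leaf b) c
  b_not_below' : ¬ N.below (N.leaf b) c'

lemma SplittingAncestor.exists_splits {x y : X} {v : V} (h : N.SplittingAncestor x y v) :
    ∃ c c', N.Splits x y v c c' ∨ N.Splits y x v c c' := by
  obtain ⟨c₁, c₂, hne, h₁, h₂, ⟨hx₁, hx₂, ⟨hy₁, hy₂⟩ | ⟨hy₂, hy₁⟩⟩ |
    ⟨hy₁, hy₂, ⟨hx₁, hx₂⟩ | ⟨hx₂, hx₁⟩⟩⟩ := h
  · exact ⟨c₁, c₂, .inl ⟨hne, h₁, h₂, hx₁, hx₂, hy₁, hy₂⟩⟩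
  · exact ⟨c₂, c₁, .inl ⟨hne.symm, h₂, h₁, hx₂, hx₁, hy₂, hy₁⟩⟩
  · exact ⟨c₁, c₂, .inr ⟨hne, h₁, h₂, hy₁, hy₂, hx₁, hx₂⟩⟩
  · exact ⟨c₂, c₁, .inr ⟨hne.symm, h₂, h₁, hy₂, hy₁, hx₂, hx₁⟩⟩

namespace Splits

variable {a b : X} {u v w c c' z s t : V}

lemma not_reflTransGen_adjExcept (hN : N.Level1) (hs : N.Splits a b v c c') (hvz : N.Adj v z)
    (hsv : N.below v s) (hzt : N.below t z) (htb : N.below (N.leaf b) t) :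
    ¬ ReflTransGen (N.AdjExcept s(v, z)) s t := fun hst => by
  obtain ⟨x, C, hC, hv, -, habove⟩ := exists_isCycle_of_bypass hvz hsv hzt hst
  have hc' := hN.mem_support_of_adj_of_adj hs.adj hs.adj' hs.ne hs.a_below hs.a_below' hC hv
  exact hs.b_not_below' (ReflTransGen.trans (habove c' hc') htb)

lemma strictlyBelow_of_isLCA (hN : N.Level1) (hs : N.Splits a b v c c')
    (hu : N.IsLCA {a, b} u) : N.strictlyBelow u v := by
  have hc : N.CommonAncestor {a, b} c := by
    rintro x (rfl | rfl)
    exacts [hs.a_below, hs.b_below]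
  have hv : N.CommonAncestor {a, b} v := fun x hx => ReflTransGen.head hs.adj (hc hx)
  have huv : u ≠ v := by
    rintro rfl
    exact hu.2 c hc ⟨.single hs.adj, (ne_of_adj hs.adj).symm⟩
  refine ⟨?_, huv⟩
  by_contra hnot
  have hvu : ¬ N.below v u := fun h => hu.2 v hv ⟨h, fun hvu => hnot (hvu ▸ .refl)⟩
  apply hs.not_reflTransGen_adjExcept hN hs.adj (N.root_reaches v) hs.b_below .refl
  have hroot_u : ReflTransGen (N.AdjExcept s(v, c)) N.root u :=
    reflTransGen_adjExcept_of_not_between (Sym2.mem_mk_left v c) (N.root_reaches u)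
      fun h => hnot h.2
  have hu_b : ReflTransGen (N.AdjExcept s(v, c)) u (N.leaf b) :=
    reflTransGen_adjExcept_of_not_between (Sym2.mem_mk_left v c) (hu.1 (by simp))
      fun h => hvu h.1
  exact hroot_u.trans hu_b

lemma mem_of_isDipath (hN : N.Level1) (hs : N.Splits a b v c c') (huv : N.strictlyBelow u v)
    (hbu : N.below (N.leaf b) u) (hvw : N.below v w) {p : List V} (hp : N.IsDipath p w u) :
    v ∈ p := by
  by_contra hvp
  obtain ⟨z, hvz, hzu⟩ := huv.1.cases_head.resolve_left fun h => huv.2 h.symm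
  exact hs.not_reflTransGen_adjExcept hN hvz hvw hzu hbu
    (hp.reflTransGen_adjExcept (Sym2.mem_mk_left v z) hvp)

lemma between_lca_lsa (hN : N.Level1) (hs : N.Splits a b v c c') (hu : N.IsLCA {a, b} u)
    (hw : N.IsLSA {a, b} w) :
    N.strictlyBelow u v ∧ N.below v w ∧ ∀ p : List V, N.IsDipath p w u → v ∈ p := by
  have huv := hs.strictlyBelow_of_isLCA hN hu
  have hvw := hw.1.above_of_adj_of_adj (by simp) (by simp) hs.adj hs.adj' hs.b_below hs.a_below'
    hs.b_not_below'
  exact ⟨huv, hvw, fun p hp => hs.mem_of_isDipath hN huv (hu.1 (by simp)) hvw hp⟩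

end Splits

end PhyloNetwork

theorem splitting_ancestor_between_lca_lsa_general {V X : Type} [Fintype V] [Fintype X]
    (N : PhyloNetwork V X) (hN : N.Level1) (x y : X)
    (u w v : V) (hu : N.IsLCA {x, y} u) (hw : N.IsLSA {x, y} w)
    (hv : N.SplittingAncestor x y v) :
    N.strictlyBelow u v ∧ N.below v w ∧
      ∀ p : List V, N.IsDipath p w u → v ∈ p := by
  obtain ⟨c, c', hs | hs⟩ := hv.exists_splits
  · exact hs.between_lca_lsa hN hu hw
  · rw [Set.pair_comm] at hu hw
    exact hs.between_lca_lsa hN hu hw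

/-- In a level-1 phylogenetic network `N` on a finite set `X`, for
distinct taxa `x, y ∈ X`, every splitting ancestor `v` of `x` and `y` satisfies
`lca(x,y) ≺ v ⪯ lsa(x,y)`; in particular, `v` lies on the unique directed path
from `lsa(x,y)` to `lca(x,y)`. -/
theorem splitting_ancestor_between_lca_lsa {V X : Type} [Fintype V] [Fintype X]
    (N : PhyloNetwork V X) (hN : N.Level1) (x y : X) (hxy : x ≠ y)
    (u w v : V) (hu : N.IsLCA {x, y} u) (hw : N.IsLSA {x, y} w)
    (hv : N.SplittingAncestor x y v) :
    N.strictlyBelow u v ∧ N.below v w ∧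
      ∀ p : List V, N.IsDipath p w u → v ∈ p :=
  splitting_ancestor_between_lca_lsa_general N hN x y u w v hu hw hv
end
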